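/- For every i, z ∈ V: Σ_{ρ ∈ Rec(z)} av_{i→z}(â_i ρ) = κ. Consequently the mean burst size in stationarity equals 1: Σ_{i∈V} Σ_{ρ ∈ Rec(z)} (α_i/κ)·av_{i→z}(ρ) = 1 for any probability distribution α on V. -/

import Mathlib

open scoped BigOperators
open Classical Filter

noncomputable section

namespace ThresholdState

variable {V : Type*} [Fintype V] [DecidableEq V]

/-- `A i j` is the number of directed edges from `i` to `j`. -/
def outdeg (A : V → V → ℕ) (i : V) : ℕ := ∑ j, A i j

def indeg (A : V → V → ℕ) (i : V) : ℕ := ∑ j, A j i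

/-- Eulerian: out-degree equals in-degree at every vertex. -/
def Eulerian (A : V → V → ℕ) : Prop := ∀ i, outdeg A i = indeg A i

/-- (Strongly) connected multigraph. -/
def Connected (A : V → V → ℕ) : Prop :=
  ∀ i j : V, Relation.ReflTransGen (fun a b => 0 < A a b) i j

def deg (A : V → V → ℕ) (i : V) : ℕ := outdeg A i

/-- Graph Laplacian: `Δu(i) = -deg(i)·u(i) + Σ_{e incoming to i} u(e⁻)`. -/
def lap (A : V → V → ℕ) (u : V → ℤ) (i : V) : ℤ :=
  -(deg A i : ℤ) * u i + ∑ j, (A j i : ℤ) * u j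

def delta (z : V) : V → ℤ := fun j => if j = z then 1 else 0

/-- Toppling vertex `i`: replace `s` by `s + Δδ_i`. -/
def toppleAt (A : V → V → ℕ) (s : V → ℤ) (i : V) : V → ℤ :=
  fun j => s j + lap A (delta i) j

def applySeq (A : V → V → ℕ) (s : V → ℤ) (l : List V) : V → ℤ :=
  l.foldl (toppleAt A) s

/-- A legal toppling sequence (avoiding the forbidden set `F`): each toppled
vertex is unstable when toppled and does not lie in `F`. -/
def ValidSeq (A : V → V → ℕ) (F : V → Prop) : (V → ℤ) → List V → Prop
  | _, [] => True
  | s, i :: l => ¬ F i ∧ (deg A i : ℤ) ≤ s i ∧ ValidSeq A F (toppleAt A s i) l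

/-- Stable at every non-forbidden vertex. -/
def StableOff (A : V → V → ℕ) (F : V → Prop) (s : V → ℤ) : Prop :=
  ∀ i, ¬ F i → s i ≤ (deg A i : ℤ) - 1

def StabilizesTo (A : V → V → ℕ) (F : V → Prop) (s : V → ℤ) (l : List V) : Prop :=
  ValidSeq A F s l ∧ StableOff A F (applySeq A s l)

def StabilizableVia (A : V → V → ℕ) (F : V → Prop) (s : V → ℤ) : Prop :=
  ∃ l, StabilizesTo A F s l

/-- Stabilizable with no forbidden vertices. -/
def Stabilizable (A : V → V → ℕ) (s : V → ℤ) : Prop :=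
  StabilizableVia A (fun _ => False) s

def stabSeq (A : V → V → ℕ) (F : V → Prop) (s : V → ℤ) : List V :=
  if h : StabilizableVia A F s then h.choose else []

def stabilizeVia (A : V → V → ℕ) (F : V → Prop) (s : V → ℤ) : V → ℤ :=
  applySeq A s (stabSeq A F s)

/-- Odometer: number of topplings at each vertex (`0` everywhere if not stabilizable). -/
def odometerVia (A : V → V → ℕ) (F : V → Prop) (s : V → ℤ) : V → ℕ :=
  fun i => (stabSeq A F s).count i

def sinkStabilize (A : V → V → ℕ) (z : V) (s : V → ℤ) : V → ℤ :=
  stabilizeVia A (fun i => i = z) s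

def sinkOdometer (A : V → V → ℕ) (z : V) (s : V → ℤ) : V → ℕ :=
  odometerVia A (fun i => i = z) s

/-- `ρ` is `z`-recurrent (Dhar's burning test): `ρ(z) = deg z`, `ρ(i) ≤ deg i - 1`
off the sink, and every site other than `z` topples exactly once in the
stabilization of `ρ + Δδ_z` with sink `z`. -/
def ZRec (A : V → V → ℕ) (z : V) (ρ : V → ℤ) : Prop :=
  ρ z = (deg A z : ℤ) ∧ (∀ i, i ≠ z → ρ i ≤ (deg A i : ℤ) - 1) ∧
  ∃ l : List V, StabilizesTo A (fun i => i = z) (fun j => ρ j + lap A (delta z) j) l ∧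
    ∀ i, i ≠ z → l.count i = 1

/-- `κ` = number of `z`-recurrent sandpiles. -/
def kappa (A : V → V → ℕ) (z : V) : ℕ := Nat.card {ρ : V → ℤ // ZRec A z ρ}

def totalMass (s : V → ℤ) : ℤ := ∑ i, s i

/-- Open addition operator `â_i` (with sink `z`). -/
def openAdd (A : V → V → ℕ) (z i : V) (ρ : V → ℤ) : V → ℤ :=
  fun j => if j = z then (deg A z : ℤ) else sinkStabilize A z (fun k => ρ k + delta i k) j

/-- `â_i⁻¹` on `Rec(z)`. -/
def openAddInv (A : V → V → ℕ) (z i : V) (ρ : V → ℤ) : V → ℤ :=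
  if h : ∃ ρ', ZRec A z ρ' ∧ openAdd A z i ρ' = ρ then h.choose else ρ

/-- Burst size `av_{i→z}(ρ) = |â_i⁻¹ρ| - |ρ| + 1`. -/
def burst (A : V → V → ℕ) (z i : V) (ρ : V → ℤ) : ℤ :=
  totalMass (openAddInv A z i ρ) - totalMass ρ + 1

/-- The `z`-recurrent decomposition `s = ρ + m·δ_z + Δv` with `ρ ∈ Rec(z)`, `v(z)=0`. -/
def ZDecomp (A : V → V → ℕ) (z : V) (s ρ : V → ℤ) (m : ℤ) (v : V → ℤ) : Prop :=
  ZRec A z ρ ∧ v z = 0 ∧ ∀ j, s j = ρ j + m * delta z j + lap A v j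

/-- `R_z(s)`: the `z`-recurrent representative of `s`. -/
def Rz (A : V → V → ℕ) (z : V) (s : V → ℤ) : V → ℤ :=
  if h : ∃ ρ, ∃ m, ∃ v, ZDecomp A z s ρ m v then h.choose else s

/-- `m_z(s)`: the integer in the `z`-recurrent decomposition of `s`. -/
def mz (A : V → V → ℕ) (z : V) (s : V → ℤ) : ℤ :=
  if h : ∃ m, ∃ ρ, ∃ v, ZDecomp A z s ρ m v then h.choose else 0

/-- Closed addition operator `a_i`. -/
def closedAdd (A : V → V → ℕ) (i : V) (s : V → ℤ) : V → ℤ :=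
  if Stabilizable A (fun j => s j + delta i j) then
    stabilizeVia A (fun _ => False) (fun j => s j + delta i j)
  else fun j => s j + delta i j

/-- The closed chain after making the additions listed in `w` (in order). -/
def chain (A : V → V → ℕ) (s0 : V → ℤ) (w : List V) : V → ℤ :=
  w.foldl (fun s i => closedAdd A i s) s0

/-- `w` is a threshold word for `s0`: the chain first becomes non-stabilizable
exactly after the additions in `w`, i.e. `τ = |w|` on the cylinder of `w`. -/
def IsThresholdWord (A : V → V → ℕ) (s0 : V → ℤ) (w : List V) : Prop :=
  ¬ Stabilizable A (chain A s0 w) ∧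
  ∀ w' : List V, w' <+: w → w' ≠ w → Stabilizable A (chain A s0 w')

def wordProb (α : V → ℝ) (w : List V) : ℝ := (w.map α).prod

/-- `P_{s0}(E at the threshold time)`: total probability of the (disjoint)
cylinders of threshold words satisfying `E`. -/
def thresholdProb (A : V → V → ℕ) (α : V → ℝ) (s0 : V → ℤ) (E : List V → Prop) : ℝ :=
  ∑' w : List V, if IsThresholdWord A s0 w ∧ E w then wordProb α w else 0

/-- `E_{s0}[f at the threshold time]`. -/
def thresholdExp (A : V → V → ℕ) (α : V → ℝ) (s0 : V → ℤ) (f : List V → ℝ) : ℝ :=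
  ∑' w : List V, if IsThresholdWord A s0 w then wordProb α w * f w else 0

end ThresholdState

/-!
Adding chips `c : V → ℕ`, stabilizing with sink `z` and resetting the sink defines an action of
`(ℕ^V, +)` on `Rec(z)` (by the least action principle, stabilization does not depend on the
toppling order), and `â_i` is the action of `δ_i`. The burning configuration `A z` acts
trivially, and toppling a vertex `u ≠ z` in a trivially acting `deg u • c` keeps it trivially
acting; pushing positivity along paths out of `z` yields a trivially acting `c` with `c i > 0`.
Hence `â_i ∘ act (c - δ_i) = id`, and `â_i` permutes the finite set `Rec(z)`.

Since `av_{i→z}(â_i ρ) = |ρ| - |â_i ρ| + 1`, the masses cancel in the sum over `Rec(z)`, leaving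
`κ`. Reindexing by `â_i` gives `Σ_ρ av_{i→z}(ρ) = κ` as well, and `κ > 0` because the maximal
stable configuration is recurrent.
-/

namespace ThresholdState

variable {V : Type*} [Fintype V] {A : V → V → ℕ}

section Laplacian

lemma lap_add (u v : V → ℤ) (j : V) :
    lap A (fun k => u k + v k) j = lap A u j + lap A v j := by
  simp only [lap, mul_add, Finset.sum_add_distrib]
  ring

lemma sum_lap (u : V → ℤ) : ∑ j, lap A u j = 0 := by
  have hdeg : ∀ j, (deg A j : ℤ) * u j = ∑ k, (A j k : ℤ) * u j := fun j => by
    simp [deg, outdeg, Finset.sum_mul]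
  simp only [lap, Finset.sum_add_distrib, neg_mul, Finset.sum_neg_distrib, hdeg]
  rw [Finset.sum_comm]
  ring

lemma lap_one (hEul : Eulerian A) (j : V) : lap A (fun _ => 1) j = 0 := by
  have : (deg A j : ℤ) = ∑ k, (A k j : ℤ) := by simp [deg, hEul j, indeg]
  simp [lap, this]

lemma le_lap {w : V → ℤ} (hw : 0 ≤ w) (u v : V) :
    (A u v : ℤ) * w u - deg A v * w v ≤ lap A w v := by
  have : (A u v : ℤ) * w u ≤ ∑ k, (A k v : ℤ) * w k :=
    Finset.single_le_sum (f := fun k => (A k v : ℤ) * w k)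
      (fun k _ => mul_nonneg (Int.natCast_nonneg _) (hw k)) (Finset.mem_univ u)
  simp only [lap]
  linarith

lemma lap_le_of_le_one (hEul : Eulerian A) {w : V → ℤ} (hw : w ≤ 1) (v : V) :
    lap A w v ≤ deg A v * (1 - w v) := by
  have : ∑ k, (A k v : ℤ) * w k ≤ deg A v := by
    calc ∑ k, (A k v : ℤ) * w k ≤ ∑ k, (A k v : ℤ) :=
          Finset.sum_le_sum fun k _ => mul_le_of_le_one_right (Int.natCast_nonneg _) (hw k)
      _ = deg A v := by simp [deg, hEul v, indeg]
  simp only [lap]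
  linarith

variable [DecidableEq V]

lemma lap_delta (i j : V) :
    lap A (delta i) j = (if j = i then -(deg A j : ℤ) else 0) + A i j := by
  simp only [lap, delta, mul_ite, mul_one, mul_zero, Finset.sum_ite_eq', Finset.mem_univ,
    if_true]

lemma lap_delta_of_ne {i j : V} (h : j ≠ i) : lap A (delta i) j = A i j := by
  simp [lap_delta, h]

end Laplacian

section Toppling

variable [DecidableEq V] {F : V → Prop}

lemma applySeq_cons (s : V → ℤ) (a : V) (l : List V) :
    applySeq A s (a :: l) = applySeq A (toppleAt A s a) l := rfl

lemma applySeq_append (s : V → ℤ) (l₁ l₂ : List V) :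
    applySeq A s (l₁ ++ l₂) = applySeq A (applySeq A s l₁) l₂ :=
  List.foldl_append

lemma applySeq_apply (s : V → ℤ) (l : List V) (j : V) :
    applySeq A s l j = s j + lap A (fun k => (l.count k : ℤ)) j := by
  induction l generalizing s with
  | nil => simp [applySeq, lap]
  | cons a l ih =>
    have hcount : (fun k => ((a :: l).count k : ℤ)) = fun k => (l.count k : ℤ) + delta a k := by
      funext k
      by_cases hk : k = a
      · simp [hk, delta]
      · simp [delta, hk, Ne.symm hk]
    rw [applySeq_cons, ih, hcount, lap_add]
    simp only [toppleAt]
    ring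

lemma applySeq_add (s g : V → ℤ) (l : List V) :
    applySeq A (fun j => s j + g j) l = fun j => applySeq A s l j + g j := by
  funext j
  simp only [applySeq_apply]
  ring

lemma applySeq_congr_count (s : V → ℤ) {l l' : List V} (h : ∀ v, l.count v = l'.count v) :
    applySeq A s l = applySeq A s l' := by
  funext j
  simp only [applySeq_apply, h]

lemma validSeq_append (s : V → ℤ) (l₁ l₂ : List V) :
    ValidSeq A F s (l₁ ++ l₂) ↔
      ValidSeq A F s l₁ ∧ ValidSeq A F (applySeq A s l₁) l₂ := by
  induction l₁ generalizing s with
  | nil => simp [ValidSeq, applySeq]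
  | cons a t ih => simp only [List.cons_append, ValidSeq, ih, applySeq_cons, and_assoc]

lemma validSeq_mono {s s' : V → ℤ} (h : ∀ j, ¬F j → s j ≤ s' j) {l : List V}
    (hl : ValidSeq A F s l) : ValidSeq A F s' l := by
  induction l generalizing s s' with
  | nil => trivial
  | cons a t ih =>
    obtain ⟨hFa, hdeg, ht⟩ := hl
    exact ⟨hFa, hdeg.trans (h a hFa), ih (fun j hj => by simpa [toppleAt] using h j hj) ht⟩

lemma ValidSeq.count_eq_zero {s : V → ℤ} {l : List V} (hl : ValidSeq A F s l) {v : V}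
    (hv : F v) : l.count v = 0 := by
  induction l generalizing s with
  | nil => rfl
  | cons a t ih =>
    obtain ⟨hFa, _, ht⟩ := hl
    have hav : a ≠ v := fun h => hFa (h ▸ hv)
    simp [hav, ih ht]

lemma toppleAt_comm (s : V → ℤ) (i j : V) :
    toppleAt A (toppleAt A s i) j = toppleAt A (toppleAt A s j) i := by
  funext k
  simp only [toppleAt]
  ring

lemma le_toppleAt_of_ne {i j : V} (h : j ≠ i) (s : V → ℤ) : s j ≤ toppleAt A s i j := by
  simp [toppleAt, lap_delta_of_ne h]

lemma validSeq_toppleAt_of_mem {j : V} {s : V → ℤ} (hj : (deg A j : ℤ) ≤ s j)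
    {p q : List V} (hjp : j ∉ p) (h : ValidSeq A F s (p ++ j :: q)) :
    ValidSeq A F (toppleAt A s j) (p ++ q) := by
  induction p generalizing s with
  | nil => exact h.2.2
  | cons a p ih =>
    obtain ⟨hFa, hdega, h'⟩ := h
    have haj : a ≠ j := fun h => hjp (h ▸ List.mem_cons_self)
    refine ⟨hFa, hdega.trans (le_toppleAt_of_ne haj s), ?_⟩
    rw [toppleAt_comm]
    exact ih (hj.trans (le_toppleAt_of_ne haj.symm s)) (fun h => hjp (List.mem_cons_of_mem a h))
      h'

lemma mem_of_stableOff {j : V} (hF : ¬F j) {s : V → ℤ} (hj : (deg A j : ℤ) ≤ s j)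
    {l : List V} (hst : StableOff A F (applySeq A s l)) : j ∈ l := by
  by_contra hjl
  have hcount : ((l.count j : ℕ) : ℤ) = 0 := by simp [List.count_eq_zero.mpr hjl]
  have hlap := le_lap (A := A) (w := fun k => (l.count k : ℤ)) (fun k => by simp) j j
  have := hst j hF
  simp only [hcount, mul_zero, sub_zero] at hlap
  rw [applySeq_apply] at this
  omega

/-- Least action principle: the first toppling of the legal sequence can be moved to the front
of the stabilizing one. -/
lemma count_le_count_of_stabilizesTo {s : V → ℤ} {l' l : List V} (hl' : ValidSeq A F s l')
    (hl : StabilizesTo A F s l) (v : V) : l'.count v ≤ l.count v := by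
  induction l' generalizing s l with
  | nil => simp
  | cons j t ih =>
    obtain ⟨hFj, hdeg, ht⟩ := hl'
    obtain ⟨p, q, hjp, rfl, -⟩ := List.exists_erase_eq (mem_of_stableOff hFj hdeg hl.2)
    have hperm : ∀ k, (j :: (p ++ q)).count k = (p ++ j :: q).count k := fun k => by
      simp only [List.count_cons, List.count_append]
      omega
    have hst : StabilizesTo A F (toppleAt A s j) (p ++ q) := by
      refine ⟨validSeq_toppleAt_of_mem hdeg hjp hl.1, ?_⟩
      rw [← applySeq_cons, applySeq_congr_count s hperm]
      exact hl.2
    have := ih ht hst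
    have := hperm v
    simp only [List.count_cons] at *
    omega

lemma StabilizesTo.count_eq {s : V → ℤ} {l l' : List V} (h : StabilizesTo A F s l)
    (h' : StabilizesTo A F s l') (v : V) : l.count v = l'.count v :=
  (count_le_count_of_stabilizesTo h.1 h' v).antisymm (count_le_count_of_stabilizesTo h'.1 h v)

lemma stabilizesTo_stabSeq {s : V → ℤ} (h : StabilizableVia A F s) :
    StabilizesTo A F s (stabSeq A F s) := by
  rw [stabSeq, dif_pos h]
  exact h.choose_spec

lemma stabilizeVia_eq {s : V → ℤ} {l : List V} (h : StabilizesTo A F s l) :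
    stabilizeVia A F s = applySeq A s l :=
  applySeq_congr_count s ((stabilizesTo_stabSeq ⟨l, h⟩).count_eq h)

lemma StabilizesTo.congr_off {s s' : V → ℤ} (hs : ∀ j, ¬F j → s j = s' j) {l : List V}
    (h : StabilizesTo A F s l) : StabilizesTo A F s' l := by
  refine ⟨validSeq_mono (fun j hj => (hs j hj).le) h.1, fun j hj => ?_⟩
  rw [applySeq_apply, ← hs j hj, ← applySeq_apply]
  exact h.2 j hj

lemma StabilizesTo.append_of_nonneg {s g : V → ℤ} (hg : 0 ≤ g) {l₁ l₂ : List V}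
    (h₁ : StabilizesTo A F s l₁)
    (h₂ : StabilizesTo A F (fun j => applySeq A s l₁ j + g j) l₂) :
    StabilizesTo A F (fun j => s j + g j) (l₁ ++ l₂) := by
  rw [← applySeq_add] at h₂
  refine ⟨(validSeq_append _ _ _).mpr ⟨validSeq_mono (fun j _ => ?_) h₁.1, h₂.1⟩, ?_⟩
  · simpa using hg j
  · rw [applySeq_append]
    exact h₂.2

lemma min_zero_le_applySeq {s : V → ℤ} {l : List V} (hl : ValidSeq A F s l)
    (j : V) : min 0 (s j) ≤ applySeq A s l j := by
  induction l generalizing s with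
  | nil => exact min_le_right _ _
  | cons a t ih =>
    obtain ⟨-, hdeg, ht⟩ := hl
    refine le_trans ?_ (ih ht)
    by_cases h : j = a
    · subst h
      have : 0 ≤ toppleAt A s j j := by
        rw [toppleAt, lap_delta, if_pos rfl]
        omega
      rw [min_eq_left this]
      exact min_le_left _ _
    · exact min_le_min_left _ (le_toppleAt_of_ne h s)

lemma sum_applySeq (s : V → ℤ) (l : List V) : ∑ j, applySeq A s l j = ∑ j, s j := by
  simp only [applySeq_apply, Finset.sum_add_distrib, sum_lap, add_zero]

lemma applySeq_le_of_validSeq {s : V → ℤ} {l : List V} (hl : ValidSeq A F s l)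
    (j : V) : applySeq A s l j ≤ ∑ k, s k - ∑ k, min 0 (s k) := by
  have hsum := sum_applySeq (A := A) s l
  rw [← Finset.add_sum_erase _ _ (Finset.mem_univ j)] at hsum
  have hmin : ∑ k ∈ Finset.univ.erase j, min 0 (s k)
      ≤ ∑ k ∈ Finset.univ.erase j, applySeq A s l k :=
    Finset.sum_le_sum fun k _ => min_zero_le_applySeq hl k
  rw [← Finset.add_sum_erase _ (fun k => min 0 (s k)) (Finset.mem_univ j)]
  linarith [min_le_left 0 (s j)]

end Toppling

section SinkStabilization

variable [DecidableEq V] {z : V}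

/-- Each toppling of `v` sends a chip to `u`, whose value is bounded by the total mass and which
topples boundedly often by induction along the path to the sink. -/
lemma exists_count_bound {v : V} (hv : Relation.ReflTransGen (fun a b => 0 < A a b) v z)
    (s : V → ℤ) : ∃ N : ℕ, ∀ l, ValidSeq A (fun i => i = z) s l → l.count v ≤ N := by
  induction hv using Relation.ReflTransGen.head_induction_on with
  | refl => exact ⟨0, fun l hl => (hl.count_eq_zero rfl).le⟩
  | @head v u hvu _ ih =>
    obtain ⟨N, hN⟩ := ih
    refine ⟨(∑ k, s k - ∑ k, min 0 (s k) - s u + deg A u * N).toNat, fun l hl => ?_⟩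
    have hle := applySeq_le_of_validSeq hl u
    have hlap := le_lap (A := A) (w := fun k => (l.count k : ℤ)) (fun k => by simp) v u
    have hNu : (l.count u : ℤ) ≤ N := by exact_mod_cast hN l hl
    have hA : (l.count v : ℤ) ≤ A v u * l.count v :=
      le_mul_of_one_le_left (by positivity) (by exact_mod_cast hvu)
    have hdeg : (deg A u : ℤ) * l.count u ≤ deg A u * N :=
      mul_le_mul_of_nonneg_left hNu (by positivity)
    rw [applySeq_apply] at hle
    omega

lemma exists_length_bound (hConn : Connected A) (z : V) (s : V → ℤ) :
    ∃ N : ℕ, ∀ l, ValidSeq A (fun i => i = z) s l → l.length ≤ N := by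
  choose N hN using fun v => exists_count_bound (hConn v z) s
  refine ⟨∑ v, N v, fun l hl => ?_⟩
  have hlen : l.length = ∑ v, l.count v := by
    simpa using (Multiset.sum_count_eq_card (s := Finset.univ) (m := (l : Multiset V))
      fun a _ => Finset.mem_univ a).symm
  rw [hlen]
  exact Finset.sum_le_sum fun v _ => hN v l hl

lemma exists_stabilizesTo_append (hConn : Connected A) {s : V → ℤ} {l₀ : List V}
    (h : ValidSeq A (fun i => i = z) s l₀) :
    ∃ l, StabilizesTo A (fun i => i = z) s (l₀ ++ l) := by
  obtain ⟨N, hN⟩ := exists_length_bound hConn z s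
  induction hn : N - l₀.length using Nat.strong_induction_on generalizing l₀ with
  | _ n ih =>
    by_cases hst : StableOff A (fun i => i = z) (applySeq A s l₀)
    · exact ⟨[], by rw [List.append_nil]; exact ⟨h, hst⟩⟩
    · obtain ⟨v, hvz, hv⟩ : ∃ v, ¬v = z ∧ (deg A v : ℤ) ≤ applySeq A s l₀ v := by
        simpa [StableOff] using hst
      have h' : ValidSeq A (fun i => i = z) s (l₀ ++ [v]) :=
        (validSeq_append _ _ _).mpr ⟨h, hvz, hv, trivial⟩
      have hlen : l₀.length + 1 ≤ N := by simpa using hN _ h'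
      have hlt : N - (l₀ ++ [v]).length < n := by
        simp only [List.length_append, List.length_singleton]
        omega
      obtain ⟨l, hl⟩ := ih _ hlt h' rfl
      exact ⟨v :: l, by simpa using hl⟩

lemma stabilizesTo_sinkStabilize (hConn : Connected A) (z : V) (s : V → ℤ) :
    StabilizesTo A (fun i => i = z) s (stabSeq A (fun i => i = z) s) :=
  let ⟨l, hl⟩ := exists_stabilizesTo_append (s := s) hConn (l₀ := []) trivial
  stabilizesTo_stabSeq ⟨l, hl⟩

lemma sinkStabilize_congr (hConn : Connected A) {s s' : V → ℤ}
    (hs : ∀ j, j ≠ z → s j = s' j) {j : V} (hj : j ≠ z) :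
    sinkStabilize A z s j = sinkStabilize A z s' j := by
  have h := stabilizesTo_sinkStabilize hConn z s
  rw [sinkStabilize, sinkStabilize, stabilizeVia_eq h, stabilizeVia_eq (h.congr_off hs),
    applySeq_apply, applySeq_apply, hs j hj]

lemma sinkStabilize_add (hConn : Connected A) (s : V → ℤ) {g : V → ℤ} (hg : 0 ≤ g) :
    sinkStabilize A z (fun j => s j + g j)
      = sinkStabilize A z (fun j => sinkStabilize A z s j + g j) := by
  have h₂ := stabilizesTo_sinkStabilize hConn z (fun j => sinkStabilize A z s j + g j)
  have h := (stabilizesTo_sinkStabilize hConn z s).append_of_nonneg hg h₂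
  rw [sinkStabilize, stabilizeVia_eq h, applySeq_append, applySeq_add]
  rfl

lemma sinkStabilize_toppleAt (hConn : Connected A) {s : V → ℤ} {v : V} (hvz : v ≠ z)
    (hv : (deg A v : ℤ) ≤ s v) : sinkStabilize A z s = sinkStabilize A z (toppleAt A s v) := by
  have h := stabilizesTo_sinkStabilize hConn z (toppleAt A s v)
  have hs : StabilizesTo A (fun i => i = z) s (v :: stabSeq A (fun i => i = z) (toppleAt A s v)) :=
    ⟨⟨hvz, hv, h.1⟩, h.2⟩
  rw [sinkStabilize, stabilizeVia_eq hs]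
  rfl

end SinkStabilization

lemma _root_.Relation.ReflTransGen.exists_rel_of_mem_of_notMem {α : Type*}
    {r : α → α → Prop} {a b : α} (h : Relation.ReflTransGen r a b) {S : Set α}
    (ha : a ∈ S) (hb : b ∉ S) : ∃ u ∈ S, ∃ x ∉ S, r u x := by
  induction h with
  | refl => exact absurd ha hb
  | @tail c d _ hcd ih =>
    by_cases hc : c ∈ S
    · exact ⟨c, hc, d, hb, hcd⟩
    · exact ih hc

section Recurrent

variable [DecidableEq V] {z : V}

lemma applySeq_burn_apply (ρ : V → ℤ) (p : List V) (v : V) :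
    applySeq A (fun j => ρ j + lap A (delta z) j) p v
      = ρ v + lap A (fun k => delta z k + p.count k) v := by
  rw [applySeq_apply, lap_add]
  ring

lemma applySeq_burn_le (hEul : Eulerian A) (ρ : V → ℤ) {p : List V}
    (hp : ∀ k, p.count k ≤ 1) (hpz : p.count z = 0) (v : V) :
    applySeq A (fun j => ρ j + lap A (delta z) j) p v
      ≤ ρ v + deg A v * (1 - (delta z v + p.count v)) := by
  have hw : (fun k => delta z k + (p.count k : ℤ)) ≤ 1 := fun k => by
    by_cases hk : k = z
    · simp [hk, delta, hpz]
    · simpa [delta, hk] using hp k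
  rw [applySeq_burn_apply]
  linarith [lap_le_of_le_one hEul hw v]

lemma applySeq_burn_of_count_eq_one (hEul : Eulerian A) (ρ : V → ℤ) {l : List V}
    (hcnt : ∀ v, v ≠ z → l.count v = 1) (hcz : l.count z = 0) :
    applySeq A (fun j => ρ j + lap A (delta z) j) l = ρ := by
  have hw : (fun k => delta z k + (l.count k : ℤ)) = fun _ => 1 := funext fun k => by
    by_cases hk : k = z
    · simp [hk, delta, hcz]
    · simp [delta, hk, hcnt k hk]
  funext v
  rw [applySeq_burn_apply, hw, lap_one hEul, add_zero]

/-- When `ρ` is stable off the sink, no vertex topples twice while `ρ + Δδ_z` is stabilized: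
a vertex that has already toppled once has lost at least as much as it can have received. -/
lemma count_le_one_of_validSeq_burn (hEul : Eulerian A) {ρ : V → ℤ}
    (hρ : ∀ v, v ≠ z → ρ v ≤ deg A v - 1) {l : List V}
    (hl : ValidSeq A (fun i => i = z) (fun j => ρ j + lap A (delta z) j) l) (v : V) :
    l.count v ≤ 1 := by
  induction l using List.reverseRecOn generalizing v with
  | nil => simp
  | append_singleton p x ih =>
    obtain ⟨hp, hxz, hx, -⟩ := (validSeq_append _ _ _).mp hl
    have hpx : p.count x = 0 := by
      by_contra hne
      have hle := applySeq_burn_le hEul ρ (ih hp) (hp.count_eq_zero rfl) x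
      have h1 : p.count x = 1 := by have := ih hp x; omega
      simp only [delta, hxz, if_false, h1] at hle
      have := hρ x hxz
      push_cast at hle
      omega
    by_cases hvx : v = x
    · simp [hvx, hpx]
    · simpa [List.count_append, List.count_singleton, Ne.symm hvx] using ih hp v

lemma ZRec.nonneg (hEul : Eulerian A) {ρ : V → ℤ} (hρ : ZRec A z ρ) (v : V) :
    0 ≤ ρ v := by
  rcases eq_or_ne v z with rfl | hvz
  · rw [hρ.1]
    positivity
  obtain ⟨l, hl, hcnt⟩ := hρ.2.2
  have hcount := count_le_one_of_validSeq_burn hEul hρ.2.1 hl.1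
  obtain ⟨p, q, rfl⟩ := List.append_of_mem (List.count_pos_iff.mp (by rw [hcnt v hvz]; omega))
  obtain ⟨hp, -, hv, -⟩ := (validSeq_append _ _ _).mp hl.1
  have hpv : p.count v = 0 := by
    have := hcnt v hvz
    simp only [List.count_append, List.count_cons_self] at this
    omega
  have hle := applySeq_burn_le hEul ρ (fun k => ((List.sublist_append_left p _).count_le k).trans
    (hcount k)) (hp.count_eq_zero rfl) v
  simp only [delta, hvz, if_false, hpv] at hle
  push_cast at hle
  omega

lemma finite_setOf_zRec (hEul : Eulerian A) (z : V) : {ρ : V → ℤ | ZRec A z ρ}.Finite := by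
  refine (Set.Finite.pi fun v => Set.finite_Icc (0 : ℤ) (deg A v)).subset fun ρ hρ v _ =>
    ⟨hρ.nonneg hEul v, ?_⟩
  rcases eq_or_ne v z with rfl | hvz
  · exact hρ.1.le
  · linarith [hρ.2.1 v hvz]

/-- In the stabilization of `ρ_max + Δδ_z`, a vertex that never topples would receive a chip
across an edge leaving the set of the sink and the toppled vertices, and so be unstable. -/
lemma zRec_max (hEul : Eulerian A) (hConn : Connected A) (z : V) :
    ZRec A z (fun v => if v = z then (deg A z : ℤ) else deg A v - 1) := by
  set ρ : V → ℤ := fun v => if v = z then (deg A z : ℤ) else deg A v - 1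
  have hρ : ∀ v, v ≠ z → ρ v = deg A v - 1 := fun v hv => by simp [ρ, hv]
  have hl := stabilizesTo_sinkStabilize hConn z (fun j => ρ j + lap A (delta z) j)
  set l := stabSeq A (fun i => i = z) (fun j => ρ j + lap A (delta z) j)
  have hpos : ∀ v, v ≠ z → 0 < l.count v := by
    by_contra! h
    obtain ⟨v, hvz, hv⟩ := h
    obtain ⟨u, hu, x, hx, hux⟩ := (hConn z v).exists_rel_of_mem_of_notMem
      (S := {k | k = z ∨ 0 < l.count k}) (Or.inl rfl) fun h => h.elim hvz (by omega)
    simp only [Set.mem_ofPred_eq, not_or, not_lt, Nat.le_zero] at hu hx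
    have hwu : 1 ≤ delta z u + (l.count u : ℤ) := by
      have : (0 : ℤ) ≤ delta z u := by unfold delta; positivity
      rcases hu with rfl | hu
      · simp [delta]
      · have : (1 : ℤ) ≤ l.count u := by exact_mod_cast hu
        linarith
    have hwx : delta z x + (l.count x : ℤ) = 0 := by simp [delta, hx.1, hx.2]
    have hlap := le_lap (A := A) (w := fun k => delta z k + (l.count k : ℤ))
      (fun k => by unfold delta; positivity) u x
    beta_reduce at hlap
    rw [hwx, mul_zero, sub_zero] at hlap
    have hstable := hl.2 x hx.1
    rw [applySeq_burn_apply, hρ x hx.1] at hstable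
    have := one_le_mul_of_one_le_of_one_le (by exact_mod_cast hux : (1 : ℤ) ≤ A u x) hwu
    linarith
  have hle := count_le_one_of_validSeq_burn hEul (fun v hv => (hρ v hv).le) hl.1
  exact ⟨by simp [ρ], fun v hv => (hρ v hv).le, l, hl,
    fun v hv => (hle v).antisymm (hpos v hv)⟩

end Recurrent

section Action

variable [DecidableEq V] {z : V}

def act (A : V → V → ℕ) (z : V) (c : V → ℕ) (ρ : V → ℤ) : V → ℤ :=
  fun j => if j = z then (deg A z : ℤ) else sinkStabilize A z (fun k => ρ k + c k) j

lemma openAdd_eq_act (i : V) (ρ : V → ℤ) : openAdd A z i ρ = act A z (Pi.single i 1) ρ := by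
  have : (fun k => ρ k + delta i k) = fun k => ρ k + ((Pi.single i 1 : V → ℕ) k : ℤ) := by
    funext k
    by_cases hk : k = i <;> simp [delta, hk]
  unfold openAdd act
  rw [this]

lemma act_add (hConn : Connected A) (c c' : V → ℕ) (ρ : V → ℤ) :
    act A z c (act A z c' ρ) = act A z (c' + c) ρ := by
  funext j
  by_cases hj : j = z
  · simp [act, hj]
  simp only [act, if_neg hj]
  rw [sinkStabilize_congr hConn (s' := fun k => sinkStabilize A z (fun m => ρ m + c' m) k + c k)
      (fun k hk => by simp [hk]) hj,
    ← sinkStabilize_add hConn _ fun k => Nat.cast_nonneg (c k)]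
  simp only [Pi.add_apply, Nat.cast_add, add_assoc]

/-- Burning `ρ` and then adding `c`, or adding `c` and then burning `act A z c ρ`, stabilize
the same configuration off the sink; comparing the two odometers shows that `act A z c ρ`
passes the burning test. -/
lemma act_zRec (hEul : Eulerian A) (hConn : Connected A) (c : V → ℕ) {ρ : V → ℤ}
    (hρ : ZRec A z ρ) : ZRec A z (act A z c ρ) := by
  obtain ⟨l₀, hl₀, hcnt₀⟩ := hρ.2.2
  have hburn := applySeq_burn_of_count_eq_one hEul ρ hcnt₀ (hl₀.1.count_eq_zero rfl)
  have hc : (0 : V → ℤ) ≤ fun k => (c k : ℤ) := fun k => Nat.cast_nonneg _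
  have hA : (0 : V → ℤ) ≤ fun k => (A z k : ℤ) := fun k => Nat.cast_nonneg _
  have h₁ := stabilizesTo_sinkStabilize hConn z (fun k => ρ k + c k)
  have h₂ := stabilizesTo_sinkStabilize hConn z (fun j => act A z c ρ j + lap A (delta z) j)
  have hburnFirst := hl₀.append_of_nonneg hc (by rw [hburn]; exact h₁)
  have hburnLast := (h₁.append_of_nonneg hA (h₂.congr_off fun j hj => by
    simp [act, hj, lap_delta_of_ne hj, sinkStabilize, stabilizeVia])).congr_off
    (s' := fun j => ρ j + lap A (delta z) j + c j) fun j hj => by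
      rw [lap_delta_of_ne hj]
      ring
  refine ⟨by simp [act], fun v hv => ?_, _, h₂, fun v hv => ?_⟩
  · simpa [act, hv, sinkStabilize, stabilizeVia] using h₁.2 v hv
  · have := hburnFirst.count_eq hburnLast v
    rw [List.count_append, List.count_append, hcnt₀ v hv] at this
    omega

def ActsTrivially (A : V → V → ℕ) (z : V) (c : V → ℕ) : Prop :=
  ∀ ρ, ZRec A z ρ → act A z c ρ = ρ

lemma actsTrivially_zero : ActsTrivially A z 0 := fun ρ hρ => by
  have hst : StabilizesTo A (fun i => i = z) ρ [] := ⟨trivial, hρ.2.1⟩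
  funext j
  by_cases hj : j = z
  · simp [act, hj, hρ.1]
  · simp [act, hj, sinkStabilize, stabilizeVia_eq hst, applySeq]

lemma actsTrivially_burn (hEul : Eulerian A) (hConn : Connected A) :
    ActsTrivially A z (A z) := fun ρ hρ => by
  obtain ⟨l, hl, hcnt⟩ := hρ.2.2
  have hburn := applySeq_burn_of_count_eq_one hEul ρ hcnt (hl.1.count_eq_zero rfl)
  funext j
  by_cases hj : j = z
  · simp [act, hj, hρ.1]
  · simp only [act, if_neg hj]
    rw [sinkStabilize_congr hConn (s' := fun k => ρ k + lap A (delta z) k)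
      (fun k hk => by rw [lap_delta_of_ne hk]) hj, sinkStabilize, stabilizeVia_eq hl, hburn]

lemma ActsTrivially.add (hConn : Connected A) {c c' : V → ℕ} (hc : ActsTrivially A z c)
    (hc' : ActsTrivially A z c') : ActsTrivially A z (c + c') := fun ρ hρ => by
  rw [← act_add hConn, hc ρ hρ, hc' ρ hρ]

lemma ActsTrivially.nsmul (hConn : Connected A) {c : V → ℕ} (hc : ActsTrivially A z c)
    (n : ℕ) : ActsTrivially A z (n • c) := by
  induction n with
  | zero =>
    rw [zero_smul]
    exact actsTrivially_zero
  | succ n ih =>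
    rw [succ_nsmul]
    exact ih.add hConn hc

lemma act_add_single_deg (hConn : Connected A) {v : V} (hvz : v ≠ z) (c : V → ℕ)
    {ρ : V → ℤ} (h0 : 0 ≤ ρ v) :
    act A z (c + Pi.single v (deg A v)) ρ = act A z (c + A v) ρ := by
  set s : V → ℤ := fun k => ρ k + ((c + Pi.single v (deg A v) : V → ℕ) k : ℤ)
  have hv : (deg A v : ℤ) ≤ s v := by
    simp only [s, Pi.add_apply, Nat.cast_add, Pi.single_eq_same]
    linarith [Nat.cast_nonneg (α := ℤ) (c v)]
  have htopple : toppleAt A s v = fun k => ρ k + ((c + A v : V → ℕ) k : ℤ) := by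
    funext k
    by_cases hk : k = v
    · subst hk
      simp only [s, toppleAt, lap_delta, Pi.add_apply, Nat.cast_add, Pi.single_eq_same, if_pos]
      ring
    · simp only [s, toppleAt, lap_delta, Pi.add_apply, Nat.cast_add, Pi.single_eq_of_ne hk,
        Nat.cast_zero, add_zero, hk, if_false, zero_add]
      ring
  funext j
  by_cases hj : j = z
  · simp [act, hj]
  · simp only [act, if_neg hj]
    rw [sinkStabilize_toppleAt hConn hvz hv, htopple]

lemma ActsTrivially.expand (hEul : Eulerian A) (hConn : Connected A) {u : V} (hu : u ≠ z)
    {c : V → ℕ} (hc : ActsTrivially A z c) (hcu : 0 < c u) :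
    ActsTrivially A z (deg A u • c - Pi.single u (deg A u) + A u) := fun ρ hρ => by
  have hle : Pi.single u (deg A u) ≤ deg A u • c := fun k => by
    by_cases hk : k = u
    · subst hk
      simpa using Nat.le_mul_of_pos_right _ hcu
    · simp [hk]
  rw [← act_add_single_deg hConn hu _ (hρ.nonneg hEul u), tsub_add_cancel_of_le hle]
  exact hc.nsmul hConn _ ρ hρ

/-- Starting from the burning configuration, which is positive at the out-neighbours of `z`,
`ActsTrivially.expand` pushes positivity along every edge. -/
lemma exists_actsTrivially_pos (hEul : Eulerian A) (hConn : Connected A) (z i : V) :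
    ∃ c, 0 < c i ∧ ActsTrivially A z c := by
  have hpath : ∀ v, Relation.TransGen (fun a b => 0 < A a b) z v →
      ∃ c, 0 < c v ∧ ActsTrivially A z c := by
    intro v h
    induction h with
    | single h => exact ⟨A z, h, actsTrivially_burn hEul hConn⟩
    | @tail u v _ huv ih =>
      obtain ⟨c, hcu, hc⟩ := ih
      rcases eq_or_ne u z with rfl | huz
      · exact ⟨A u, huv, actsTrivially_burn hEul hConn⟩
      · exact ⟨_, huv.trans_le (Nat.le_add_left _ _), hc.expand hEul hConn huz hcu⟩
  rcases Relation.reflTransGen_iff_eq_or_transGen.mp (hConn z i) with rfl | h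
  · by_cases hV : ∃ w, w ≠ i
    · obtain ⟨w, hw⟩ := hV
      obtain h | h := Relation.reflTransGen_iff_eq_or_transGen.mp (hConn i w)
      · exact absurd h hw
      · exact hpath i (h.trans_left (hConn w i))
    · push Not at hV
      refine ⟨1, one_pos, fun ρ hρ => funext fun j => ?_⟩
      simp [act, hV j, hρ.1]
  · exact hpath i h

lemma zRec_openAdd (hEul : Eulerian A) (hConn : Connected A) (i : V) {ρ : V → ℤ}
    (hρ : ZRec A z ρ) : ZRec A z (openAdd A z i ρ) :=
  openAdd_eq_act (A := A) i ρ ▸ act_zRec hEul hConn _ hρ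

lemma bijective_openAdd (hEul : Eulerian A) (hConn : Connected A) (z i : V) :
    Function.Bijective fun ρ : {ρ // ZRec A z ρ} =>
      (⟨openAdd A z i ρ, zRec_openAdd hEul hConn i ρ.2⟩ : {ρ // ZRec A z ρ}) := by
  have : Finite {ρ // ZRec A z ρ} := (finite_setOf_zRec hEul z).to_subtype
  refine Finite.surjective_iff_bijective.mp fun σ => ?_
  obtain ⟨c, hci, hc⟩ := exists_actsTrivially_pos hEul hConn z i
  have hle : Pi.single i 1 ≤ c := fun k => by
    by_cases hk : k = i
    · subst hk
      simpa using Nat.one_le_iff_ne_zero.mpr hci.ne'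
    · simp [hk]
  refine ⟨⟨act A z (c - Pi.single i 1) σ, act_zRec hEul hConn _ σ.2⟩, Subtype.ext ?_⟩
  simp only [openAdd_eq_act, act_add hConn, tsub_add_cancel_of_le hle]
  exact hc σ σ.2

lemma openAddInv_openAdd (hEul : Eulerian A) (hConn : Connected A) (i : V) {ρ : V → ℤ}
    (hρ : ZRec A z ρ) : openAddInv A z i (openAdd A z i ρ) = ρ := by
  have hex : ∃ ρ', ZRec A z ρ' ∧ openAdd A z i ρ' = openAdd A z i ρ := ⟨ρ, hρ, rfl⟩
  rw [openAddInv, dif_pos hex]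
  exact congrArg Subtype.val <| (bijective_openAdd hEul hConn z i).1
    (a₁ := ⟨_, hex.choose_spec.1⟩) (a₂ := ⟨ρ, hρ⟩) (Subtype.ext hex.choose_spec.2)

end Action

section Burst

variable [DecidableEq V]

lemma tsum_burst_openAdd (hEul : Eulerian A) (hConn : Connected A) (z i : V) :
    ∑' ρ : {ρ // ZRec A z ρ}, (burst A z i (openAdd A z i ρ.1) : ℝ) = kappa A z := by
  have : Fintype {ρ // ZRec A z ρ} := (finite_setOf_zRec hEul z).fintype
  have hterm : ∀ ρ : {ρ // ZRec A z ρ}, (burst A z i (openAdd A z i ρ.1) : ℝ)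
      = totalMass ρ.1 - totalMass (openAdd A z i ρ.1) + 1 := fun ρ => by
    rw [burst, openAddInv_openAdd hEul hConn i ρ.2]
    push_cast
    ring
  simp only [tsum_fintype, hterm, Finset.sum_add_distrib, Finset.sum_sub_distrib]
  rw [(bijective_openAdd hEul hConn z i).sum_comp fun σ => (totalMass σ.1 : ℝ)]
  simp [kappa, Nat.card_eq_fintype_card]

lemma tsum_burst (hEul : Eulerian A) (hConn : Connected A) (z i : V) :
    ∑' ρ : {ρ // ZRec A z ρ}, (burst A z i ρ.1 : ℝ) = kappa A z := by
  rw [← tsum_burst_openAdd hEul hConn z i,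
    ← (Equiv.ofBijective _ (bijective_openAdd hEul hConn z i)).tsum_eq]
  rfl

lemma kappa_pos (hEul : Eulerian A) (hConn : Connected A) (z : V) : 0 < kappa A z :=
  have : Finite {ρ // ZRec A z ρ} := (finite_setOf_zRec hEul z).to_subtype
  have : Nonempty {ρ // ZRec A z ρ} := ⟨⟨_, zRec_max hEul hConn z⟩⟩
  Nat.card_pos

end Burst

end ThresholdState

open ThresholdState in
/-- `Σ_{ρ ∈ Rec(z)} av_{i→z}(â_i ρ) = κ`; consequently the mean burst size in
stationarity equals `1` for any probability distribution `α` on `V`. -/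
theorem statement_13 {V : Type*} [Fintype V] [DecidableEq V]
    (A : V → V → ℕ) (hEul : Eulerian A) (hConn : Connected A)
    (i z : V) :
    (∑' ρ : {ρ : V → ℤ // ZRec A z ρ}, (burst A z i (openAdd A z i ρ.1) : ℝ))
        = (kappa A z : ℝ) ∧
    (∀ α : V → ℝ, (∀ j, 0 ≤ α j) → ∑ j, α j = 1 →
      ∑ j : V, ∑' ρ : {ρ : V → ℤ // ZRec A z ρ},
        (α j / (kappa A z : ℝ)) * (burst A z j ρ.1 : ℝ) = 1) := by
  have hκ : (kappa A z : ℝ) ≠ 0 := Nat.cast_ne_zero.mpr (kappa_pos hEul hConn z).ne'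
  refine ⟨tsum_burst_openAdd hEul hConn z i, fun α _ hα => ?_⟩
  simp_rw [tsum_mul_left, tsum_burst hEul hConn z, div_mul_cancel₀ _ hκ, hα]
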